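/- For real k ≥ 4, the Mahler measure of P = k − z − z⁻¹ − w − w⁻¹ equals log k − Σ_{n=1}^∞ C(2n,n)² k^{-2n}/(2n). -/

import Mathlib

open MeasureTheory

/-- The Mahler measure of a function of two complex variables. -/
noncomputable def mahlerMeasure2 (P : ℂ → ℂ → ℂ) : ℝ :=
  ∫ θ in Set.Ioc (0:ℝ) 1 ×ˢ Set.Ioc (0:ℝ) 1,
    Real.log (‖P (Complex.exp (2 * Real.pi * Complex.I * (θ.1 : ℂ)))
      (Complex.exp (2 * Real.pi * Complex.I * (θ.2 : ℂ)))‖)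

/-! On the torus `|k - z - z⁻¹ - w - w⁻¹| = k - X` with `X = 2 cos 2πθ + 2 cos 2πφ ∈ [-4, 4]`, so
the Mahler measure is `∫ log (k - X)`. Expanding `log (1 - X / k)` as a power series and
integrating termwise, the odd moments of `X` vanish and `∫ X ^ (2n) = C(2n,n)²`: expand
binomially and use `∫ (2 cos 2πθ) ^ (2j) = C(2j,j)` together with
`Σ C(2n,2j) C(2j,j) C(2n-2j,n-j) = C(2n,n) Σ C(n,j)² = C(2n,n)²`. Termwise integration is
legitimate even at `k = 4`: `∫ |X / 4| ^ (2n) = C(2n,n)² / 16ⁿ ≤ 1 / (2n + 1)`, so the series of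
absolute integrals is dominated by `Σ 1 / n²`. -/

open Finset Real Set

theorem Nat.two_mul_add_one_mul_centralBinom_sq_le (n : ℕ) :
    (2 * n + 1) * n.centralBinom ^ 2 ≤ 16 ^ n := by
  induction n with
  | zero => simp
  | succ n ih =>
    refine Nat.le_of_mul_le_mul_right (c := (n + 1) ^ 2) ?_ (by positivity)
    calc (2 * (n + 1) + 1) * (n + 1).centralBinom ^ 2 * (n + 1) ^ 2
        = (2 * n + 3) * ((n + 1) * (n + 1).centralBinom) ^ 2 := by ring
      _ = 4 * ((2 * n + 1) * (2 * n + 3)) * ((2 * n + 1) * n.centralBinom ^ 2) := by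
          rw [Nat.succ_mul_centralBinom_succ]; ring
      _ ≤ 4 * ((2 * n + 1) * (2 * n + 3)) * 16 ^ n := by gcongr
      _ ≤ 16 ^ (n + 1) * (n + 1) ^ 2 := by rw [pow_succ]; nlinarith [Nat.zero_le (16 ^ n)]

theorem Nat.choose_mul_centralBinom_mul_centralBinom {n i : ℕ} (h : i ≤ n) :
    (2 * n).choose (2 * i) * i.centralBinom * (n - i).centralBinom =
      n.centralBinom * n.choose i ^ 2 := by
  have h2 : 2 * i ≤ 2 * n := by omega
  have hsub : 2 * n - 2 * i = 2 * (n - i) := by omega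
  have hn : 2 * n - n = n := by omega
  have hi : 2 * i - i = i := by omega
  have hni : 2 * (n - i) - (n - i) = n - i := by omega
  rw [← Nat.cast_inj (R := ℚ)]
  simp only [Nat.centralBinom_eq_two_mul_choose, Nat.cast_mul, Nat.cast_pow,
    Nat.cast_choose ℚ h, Nat.cast_choose ℚ h2, Nat.cast_choose ℚ (Nat.le_mul_of_pos_left i two_pos),
    Nat.cast_choose ℚ (Nat.le_mul_of_pos_left (n - i) two_pos),
    Nat.cast_choose ℚ (Nat.le_mul_of_pos_left n two_pos), hsub, hn, hi, hni]
  field_simp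

theorem Nat.sum_choose_mul_centralBinom_mul_centralBinom (n : ℕ) :
    ∑ i ∈ range (n + 1), (2 * n).choose (2 * i) * i.centralBinom * (n - i).centralBinom =
      n.centralBinom ^ 2 := by
  rw [sum_congr rfl fun i hi => Nat.choose_mul_centralBinom_mul_centralBinom
    (Nat.lt_succ_iff.mp (mem_range.mp hi)), ← mul_sum, Nat.sum_range_choose_sq,
    ← Nat.centralBinom_eq_two_mul_choose, sq]

theorem Finset.sum_range_two_mul_add_one {M : Type*} [AddCommMonoid M] (f : ℕ → M) (n : ℕ) :
    ∑ j ∈ range (2 * n + 1), f j =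
      ∑ i ∈ range (n + 1), f (2 * i) + ∑ i ∈ range n, f (2 * i + 1) := by
  induction n with
  | zero => simp
  | succ n ih =>
    rw [show 2 * (n + 1) + 1 = 2 * n + 1 + 1 + 1 by ring, sum_range_succ, sum_range_succ, ih,
      sum_range_succ (fun i => f (2 * i)) (n + 1), sum_range_succ (fun i => f (2 * i + 1)) n,
      show 2 * (n + 1) = 2 * n + 1 + 1 by ring]
    abel

theorem integral_cos_pow_add_two_zero_two_pi (n : ℕ) :
    ∫ x in (0 : ℝ)..2 * π, cos x ^ (n + 2) =
      (n + 1) / (n + 2) * ∫ x in (0 : ℝ)..2 * π, cos x ^ n := by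
  simp [integral_cos_pow]

theorem integral_cos_pow_odd_zero_two_pi (n : ℕ) :
    ∫ x in (0 : ℝ)..2 * π, cos x ^ (2 * n + 1) = 0 := by
  induction n with
  | zero => simp
  | succ n ih =>
    rw [show 2 * (n + 1) + 1 = 2 * n + 1 + 2 by ring, integral_cos_pow_add_two_zero_two_pi, ih,
      mul_zero]

theorem integral_cos_pow_even_zero_two_pi (n : ℕ) :
    ∫ x in (0 : ℝ)..2 * π, cos x ^ (2 * n) = 2 * π * n.centralBinom / 4 ^ n := by
  induction n with
  | zero => simp
  | succ n ih =>
    have h : ((n + 1).centralBinom : ℝ) = 2 * (2 * n + 1) * n.centralBinom / (n + 1) := by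
      rw [eq_div_iff (by positivity), mul_comm]
      exact_mod_cast Nat.succ_mul_centralBinom_succ n
    rw [show 2 * (n + 1) = 2 * n + 2 by ring, integral_cos_pow_add_two_zero_two_pi, ih, h]
    push_cast
    field_simp
    ring

theorem setIntegral_Ioc_zero_one_comp_two_pi_mul (g : ℝ → ℝ) :
    ∫ θ in Ioc (0 : ℝ) 1, g (2 * π * θ) = (2 * π)⁻¹ * ∫ u in (0 : ℝ)..2 * π, g u := by
  rw [← intervalIntegral.integral_of_le zero_le_one,
    intervalIntegral.integral_comp_mul_left g (by positivity), mul_zero, mul_one, smul_eq_mul]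

theorem integral_two_cos_pow_odd (n : ℕ) :
    ∫ θ in Ioc (0 : ℝ) 1, (2 * cos (2 * π * θ)) ^ (2 * n + 1) = 0 := by
  rw [setIntegral_Ioc_zero_one_comp_two_pi_mul (fun u => (2 * cos u) ^ (2 * n + 1))]
  simp only [mul_pow, intervalIntegral.integral_const_mul, integral_cos_pow_odd_zero_two_pi,
    mul_zero]

theorem integral_two_cos_pow_even (n : ℕ) :
    ∫ θ in Ioc (0 : ℝ) 1, (2 * cos (2 * π * θ)) ^ (2 * n) = n.centralBinom := by
  rw [setIntegral_Ioc_zero_one_comp_two_pi_mul (fun u => (2 * cos u) ^ (2 * n))]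
  simp only [mul_pow, intervalIntegral.integral_const_mul]
  rw [integral_cos_pow_even_zero_two_pi, pow_mul]
  field_simp
  ring

theorem integral_log_sub_eq_log_sub_tsum {α : Type*} [MeasurableSpace α] {μ : Measure α}
    [IsProbabilityMeasure μ] {f : α → ℝ} {c : ℝ} (hc : 0 < c)
    (hf : AEStronglyMeasurable f μ) (hlt : ∀ᵐ x ∂μ, |f x| < c)
    (hsum : Summable fun n : ℕ => ∫ x, |f x / c| ^ (n + 1) / (n + 1) ∂μ) :
    ∫ x, log (c - f x) ∂μ = log c - ∑' n : ℕ, ∫ x, (f x / c) ^ (n + 1) / (n + 1) ∂μ := by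
  have hlt' : ∀ᵐ x ∂μ, |f x / c| < 1 := hlt.mono fun x hx => by
    rwa [abs_div, abs_of_pos hc, div_lt_one hc]
  have hterm_int (n : ℕ) : Integrable (fun x => (f x / c) ^ (n + 1) / (n + 1)) μ := by
    refine .of_bound (by fun_prop) 1 (hlt'.mono fun x hx => ?_)
    rw [norm_div, norm_pow, Real.norm_eq_abs, Real.norm_of_nonneg n.cast_add_one_pos.le]
    exact div_le_one_of_le₀ ((pow_le_one₀ (abs_nonneg _) hx.le).trans
      (le_add_of_nonneg_left n.cast_nonneg)) n.cast_add_one_pos.le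
  -- `log c` enters as the zeroth term: `log (1 - f / c)` is not known to be integrable
  let F : ℕ → α → ℝ := fun n x => if n = 0 then log c else -((f x / c) ^ n / n)
  have hF_succ (n : ℕ) : F (n + 1) = fun x => -((f x / c) ^ (n + 1) / (n + 1)) := by
    ext x; simp [F]
  have hF_int (n : ℕ) : Integrable (F n) μ := by
    cases n with
    | zero => exact integrable_const _
    | succ n => rw [hF_succ]; exact (hterm_int n).neg
  have hF_sum : Summable fun n => ∫ x, ‖F n x‖ ∂μ := by
    refine (summable_nat_add_iff 1).mp (hsum.congr fun n => ?_)
    simp [hF_succ, abs_div, abs_of_pos (n.cast_add_one_pos : (0 : ℝ) < n + 1)]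
  have hF_tsum : ∀ᵐ x ∂μ, ∑' n, F n x = log (c - f x) := hlt'.mono fun x hx => by
    refine ((hasSum_nat_add_iff' 1).mp ?_).tsum_eq
    have h1 : 0 < 1 - f x / c := by linarith [(abs_lt.mp hx).2]
    rw [sum_range_one, show c - f x = c * (1 - f x / c) by field_simp, log_mul hc.ne' h1.ne']
    simpa [hF_succ, F] using (hasSum_pow_div_log_of_abs_lt_one hx).neg
  rw [← integral_congr_ae hF_tsum,
    ← (hasSum_integral_of_summable_integral_norm hF_int hF_sum).tsum_eq,
    (hF_sum.of_norm_bounded fun n => norm_integral_le_integral_norm _).tsum_eq_zero_add]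
  simp only [hF_succ, integral_neg, tsum_neg]
  simp [F, sub_eq_add_neg]

instance : IsProbabilityMeasure (volume.restrict (Ioc (0 : ℝ) 1)) := ⟨by simp⟩

noncomputable abbrev unitSquareVolume : Measure (ℝ × ℝ) :=
  (volume.restrict (Ioc (0 : ℝ) 1)).prod (volume.restrict (Ioc (0 : ℝ) 1))

noncomputable def cosSum (p : ℝ × ℝ) : ℝ := 2 * cos (2 * π * p.1) + 2 * cos (2 * π * p.2)

@[fun_prop]
theorem continuous_cosSum : Continuous cosSum := by
  unfold cosSum; fun_prop

theorem abs_cosSum_le (p : ℝ × ℝ) : |cosSum p| ≤ 4 := by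
  rw [cosSum, abs_le]
  constructor <;> linarith [neg_one_le_cos (2 * π * p.1), neg_one_le_cos (2 * π * p.2),
    cos_le_one (2 * π * p.1), cos_le_one (2 * π * p.2)]

theorem integrable_comp_cosSum {g : ℝ → ℝ} (hg : Continuous g) :
    Integrable (fun p => g (cosSum p)) unitSquareVolume := by
  obtain ⟨C, hC⟩ := (isCompact_Icc (a := (-4 : ℝ)) (b := 4)).exists_bound_of_continuousOn
    hg.continuousOn
  exact .of_bound (by fun_prop) C (.of_forall fun p => hC _ (abs_le.mp (abs_cosSum_le p)))

theorem integral_cosSum_pow (m : ℕ) :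
    ∫ p, cosSum p ^ m ∂unitSquareVolume = ∑ j ∈ range (m + 1), (m.choose j : ℝ) *
      ((∫ θ in Ioc (0 : ℝ) 1, (2 * cos (2 * π * θ)) ^ j) *
        ∫ θ in Ioc (0 : ℝ) 1, (2 * cos (2 * π * θ)) ^ (m - j)) := by
  have hint (j : ℕ) :
      Integrable (fun θ : ℝ => (2 * cos (2 * π * θ)) ^ j) (volume.restrict (Ioc 0 1)) :=
    Continuous.integrableOn_Ioc (by fun_prop)
  simp_rw [cosSum, add_pow]
  rw [integral_finsetSum _ fun j _ => ((hint j).mul_prod (hint (m - j))).mul_const _]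
  refine sum_congr rfl fun j _ => ?_
  rw [integral_mul_const, mul_comm, integral_prod_mul (fun θ => (2 * cos (2 * π * θ)) ^ j)
    (fun θ => (2 * cos (2 * π * θ)) ^ (m - j))]

theorem integral_cosSum_pow_odd (n : ℕ) : ∫ p, cosSum p ^ (2 * n + 1) ∂unitSquareVolume = 0 := by
  rw [integral_cosSum_pow]
  refine sum_eq_zero fun j hj => ?_
  obtain ⟨i, rfl | rfl⟩ := Nat.even_or_odd' j
  · have hi : 2 * n + 1 - 2 * i = 2 * (n - i) + 1 := by
      have := mem_range.mp hj; omega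
    rw [hi, integral_two_cos_pow_odd, mul_zero, mul_zero]
  · rw [integral_two_cos_pow_odd, zero_mul, mul_zero]

theorem integral_cosSum_pow_even (n : ℕ) :
    ∫ p, cosSum p ^ (2 * n) ∂unitSquareVolume = (n.centralBinom : ℝ) ^ 2 := by
  rw [integral_cosSum_pow, sum_range_two_mul_add_one]
  have hodd : ∑ i ∈ range n, ((2 * n).choose (2 * i + 1) : ℝ) *
      ((∫ θ in Ioc (0 : ℝ) 1, (2 * cos (2 * π * θ)) ^ (2 * i + 1)) *
        ∫ θ in Ioc (0 : ℝ) 1, (2 * cos (2 * π * θ)) ^ (2 * n - (2 * i + 1))) = 0 :=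
    sum_eq_zero fun i _ => by rw [integral_two_cos_pow_odd, zero_mul, mul_zero]
  rw [hodd, add_zero, ← Nat.cast_pow, ← Nat.sum_choose_mul_centralBinom_mul_centralBinom]
  push_cast
  refine sum_congr rfl fun i _ => ?_
  rw [← Nat.mul_sub, integral_two_cos_pow_even, integral_two_cos_pow_even, mul_assoc]

theorem ae_abs_cos_two_pi_mul_lt_one : ∀ᵐ θ : ℝ, |cos (2 * π * θ)| < 1 := by
  filter_upwards [(countable_range fun n : ℤ => (n : ℝ) / 2).ae_notMem volume] with θ hθ
  refine (abs_cos_le_one _).lt_of_ne fun h => hθ ?_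
  have hsin : sin (2 * π * θ) = 0 := by
    nlinarith [sin_sq_add_cos_sq (2 * π * θ), sq_abs (cos (2 * π * θ))]
  obtain ⟨n, hn⟩ := sin_eq_zero_iff.mp hsin
  exact ⟨n, by field_simp [pi_ne_zero] at hn ⊢; linarith⟩

theorem ae_abs_cosSum_lt : ∀ᵐ p ∂unitSquareVolume, |cosSum p| < 4 := by
  filter_upwards [Measure.quasiMeasurePreserving_fst.ae
    (ae_restrict_of_ae ae_abs_cos_two_pi_mul_lt_one)] with p hp
  rw [cosSum, abs_lt]
  constructor <;> linarith [abs_lt.mp hp, neg_one_le_cos (2 * π * p.2), cos_le_one (2 * π * p.2)]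

theorem integral_abs_cosSum_div_pow_le {k : ℝ} (hk : 4 ≤ k) (n : ℕ) :
    ∫ p, |cosSum p / k| ^ (n + 1) ∂unitSquareVolume ≤ 1 / (n + 1) := by
  set q := (n + 1) / 2
  have hpt (p : ℝ × ℝ) : |cosSum p / k| ^ (n + 1) ≤ cosSum p ^ (2 * q) / 16 ^ q := by
    have hk' : |cosSum p / k| ≤ |cosSum p / 4| := by
      rw [abs_div, abs_div, abs_of_pos (by linarith : (0 : ℝ) < k),
        abs_of_pos (four_pos : (0 : ℝ) < 4)]
      exact div_le_div_of_nonneg_left (abs_nonneg _) four_pos hk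
    have h4 : |cosSum p / 4| ≤ 1 := by
      rw [abs_div, abs_of_pos (four_pos : (0 : ℝ) < 4), div_le_one four_pos]; exact abs_cosSum_le p
    calc |cosSum p / k| ^ (n + 1) ≤ |cosSum p / k| ^ (2 * q) :=
          pow_le_pow_of_le_one (abs_nonneg _) (hk'.trans h4) (by omega)
      _ ≤ |cosSum p / 4| ^ (2 * q) := pow_le_pow_left₀ (abs_nonneg _) hk' _
      _ = cosSum p ^ (2 * q) / 16 ^ q := by
          rw [(even_two_mul q).pow_abs, div_pow, pow_mul (4 : ℝ)]; norm_num
  have hq : (n + 1 : ℝ) ≤ 2 * q + 1 := by exact_mod_cast (by omega : n + 1 ≤ 2 * q + 1)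
  have hcb : (2 * q + 1 : ℝ) * q.centralBinom ^ 2 ≤ 16 ^ q := by
    exact_mod_cast Nat.two_mul_add_one_mul_centralBinom_sq_le q
  calc ∫ p, |cosSum p / k| ^ (n + 1) ∂unitSquareVolume
      ≤ ∫ p, cosSum p ^ (2 * q) / 16 ^ q ∂unitSquareVolume :=
        integral_mono (integrable_comp_cosSum (g := fun x => |x / k| ^ (n + 1)) (by fun_prop))
          (integrable_comp_cosSum (g := fun x => x ^ (2 * q) / 16 ^ q) (by fun_prop)) hpt
    _ = q.centralBinom ^ 2 / 16 ^ q := by rw [integral_div, integral_cosSum_pow_even]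
    _ ≤ 1 / (2 * q + 1) := by
        rw [div_le_div_iff₀ (by positivity) (by positivity)]; linarith
    _ ≤ 1 / (n + 1) := one_div_le_one_div_of_le (by positivity) hq

theorem summable_integral_abs_cosSum_div_pow_div {k : ℝ} (hk : 4 ≤ k) :
    Summable fun n : ℕ => ∫ p, |cosSum p / k| ^ (n + 1) / (n + 1) ∂unitSquareVolume := by
  have hsum : Summable fun n : ℕ => 1 / ((n : ℝ) + 1) ^ 2 := by
    simpa using (summable_nat_add_iff 1).mpr (Real.summable_one_div_nat_pow.mpr one_lt_two)
  refine hsum.of_nonneg_of_le (fun n => integral_nonneg fun p => by positivity) fun n => ?_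
  rw [integral_div, sq, ← div_div]
  gcongr
  exact integral_abs_cosSum_div_pow_le hk n

theorem tsum_integral_cosSum_div_pow_div (k : ℝ) :
    ∑' n : ℕ, ∫ p, (cosSum p / k) ^ (n + 1) / (n + 1) ∂unitSquareVolume =
      ∑' n : ℕ, ((2 * (n + 1)).choose (n + 1) : ℝ) ^ 2 *
        k ^ (-(2 * ((n : ℤ) + 1))) / (2 * ((n : ℝ) + 1)) := by
  have hterm (m : ℕ) : ∫ p, (cosSum p / k) ^ (m + 1) / (m + 1) ∂unitSquareVolume =
      (∫ p, cosSum p ^ (m + 1) ∂unitSquareVolume) / k ^ (m + 1) / (m + 1) := by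
    simp_rw [div_pow]; rw [integral_div, integral_div]
  have hsupp : Function.support (fun m : ℕ => ∫ p, (cosSum p / k) ^ (m + 1) / (m + 1)
      ∂unitSquareVolume) ⊆ range fun n => 2 * n + 1 := by
    intro m hm
    obtain ⟨n, rfl | rfl⟩ := Nat.even_or_odd' m
    · simp [hterm, integral_cosSum_pow_odd] at hm
    · exact ⟨n, rfl⟩
  have hinj : (fun n : ℕ => 2 * n + 1).Injective := fun a b h => by simp only at h; omega
  rw [← hinj.tsum_eq hsupp]
  refine tsum_congr fun n => ?_
  rw [hterm, show 2 * n + 1 + 1 = 2 * (n + 1) by ring, integral_cosSum_pow_even,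
    Nat.centralBinom_eq_two_mul_choose, show -(2 * ((n : ℤ) + 1)) = -((2 * (n + 1) : ℕ) : ℤ) by
      push_cast; ring, zpow_neg, zpow_natCast]
  push_cast
  ring

theorem exp_two_pi_I_mul_add_inv (θ : ℝ) :
    Complex.exp (2 * π * Complex.I * θ) + (Complex.exp (2 * π * Complex.I * θ))⁻¹ =
      ((2 * cos (2 * π * θ) : ℝ) : ℂ) := by
  rw [← Complex.exp_neg]
  push_cast
  rw [Complex.two_cos]
  ring_nf

theorem mahlerMeasure2_eq_integral_log_sub_cosSum (k : ℝ) :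
    mahlerMeasure2 (fun z w => (k : ℂ) - z - z⁻¹ - w - w⁻¹) =
      ∫ p, log (k - cosSum p) ∂unitSquareVolume := by
  rw [mahlerMeasure2, Measure.volume_eq_prod, ← Measure.prod_restrict]
  refine integral_congr_ae (.of_forall fun p => ?_)
  have hP : (k : ℂ) - Complex.exp (2 * π * Complex.I * p.1)
      - (Complex.exp (2 * π * Complex.I * p.1))⁻¹ - Complex.exp (2 * π * Complex.I * p.2)
      - (Complex.exp (2 * π * Complex.I * p.2))⁻¹ = ((k - cosSum p : ℝ) : ℂ) := by
    rw [cosSum, Complex.ofReal_sub, Complex.ofReal_add, ← exp_two_pi_I_mul_add_inv,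
      ← exp_two_pi_I_mul_add_inv]
    ring
  simp only [hP, Complex.norm_real, Real.norm_eq_abs, log_abs]

/-- For real `k ≥ 4`,
`m(k − z − z⁻¹ − w − w⁻¹) = log k − Σ_{n≥1} C(2n,n)² k^{-2n}/(2n)`. -/
theorem mahlerMeasure_F0 (k : ℝ) (hk : 4 ≤ k) :
    mahlerMeasure2 (fun z w => (k : ℂ) - z - z⁻¹ - w - w⁻¹) =
      Real.log k -
        ∑' n : ℕ, ((2 * (n + 1)).choose (n + 1) : ℝ) ^ 2 *
          k ^ (-(2 * ((n : ℤ) + 1))) / (2 * ((n : ℝ) + 1)) := by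
  rw [mahlerMeasure2_eq_integral_log_sub_cosSum, ← tsum_integral_cosSum_div_pow_div]
  exact integral_log_sub_eq_log_sub_tsum (by linarith) continuous_cosSum.aestronglyMeasurable
    (ae_abs_cosSum_lt.mono fun p hp => hp.trans_le hk) (summable_integral_abs_cosSum_div_pow_div hk)
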